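/- arXiv:1709.01604 — 6 statements merged into one kernel-verified Lean document; each statement's English description precedes it below -/
import Mathlib

section
/- Let A be an ε-differentially private learning algorithm (i.e., for training sets S, S' differing in one point and any set Y of models, Pr[A(S) ∈ Y] ≤ e^ε · Pr[A(S') ∈ Y]). Then for any membership inference adversary 𝒜 outputting values in {0,1}, the membership advantage Adv = E_{S∼D^n}[(1/n) Σ_{i=1}^n (𝒜(z_i, A(S^{(i)}), n, D) − 𝒜(z_i, A(S), n, D))] satisfies Adv ≤ e^ε − 1. -/
open MeasureTheory

/-- An ε-differentially private learning algorithm (with models drawn from a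
finite set `Fin k`, where `A S j` is the probability that training on `S` yields model `j`)
limits the membership advantage of every adversary to at most `e^ε - 1`. -/
theorem dp_bounds_membership_advantage
    {Z : Type*} [MeasurableSpace Z] (D : Measure Z) [IsProbabilityMeasure D]
    (n k : ℕ) (hn : 0 < n)
    (A : (Fin n → Z) → Fin k → ℝ)
    (hA0 : ∀ S j, 0 ≤ A S j)
    (hA1 : ∀ S, ∑ j, A S j = 1)
    (ε : ℝ) (hε : 0 ≤ ε)
    (hDP : ∀ S S' : Fin n → Z, (∃ i, ∀ j, j ≠ i → S j = S' j) →
      ∀ m : Fin k, A S m ≤ Real.exp ε * A S' m)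
    (adv : Z → Fin k → ℝ)
    (hadv : ∀ z m, 0 ≤ adv z m ∧ adv z m ≤ 1) :
    (∫ S, ∫ z', (1 / (n : ℝ)) *
        ∑ i : Fin n,
          ((∑ m : Fin k, A (Function.update S i z') m * adv (S i) m) -
           (∑ m : Fin k, A S m * adv (S i) m)) ∂D ∂(Measure.pi fun _ : Fin n => D))
      ≤ Real.exp ε - 1 := by
  set C := Real.exp ε - 1 with hCdef
  have hC : 0 ≤ C := by
    have := Real.one_le_exp hε
    simp [hCdef]; linarith
  -- sum of probabilities times adv is between 0 and 1
  have hsum_le : ∀ (S : Fin n → Z) (z : Z), ∑ m : Fin k, A S m * adv z m ≤ 1 := by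
    intro S z
    calc ∑ m : Fin k, A S m * adv z m ≤ ∑ m : Fin k, A S m * 1 := by
          apply Finset.sum_le_sum
          intro m _
          exact mul_le_mul_of_nonneg_left (hadv z m).2 (hA0 S m)
      _ = 1 := by simp [hA1 S]
  have hsum_nonneg : ∀ (S : Fin n → Z) (z : Z), 0 ≤ ∑ m : Fin k, A S m * adv z m := by
    intro S z
    exact Finset.sum_nonneg fun m _ => mul_nonneg (hA0 S m) (hadv z m).1
  -- pointwise bound on each term
  have key : ∀ (S : Fin n → Z) (z' : Z) (i : Fin n),
      |(∑ m : Fin k, A (Function.update S i z') m * adv (S i) m) -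
        (∑ m : Fin k, A S m * adv (S i) m)| ≤ C := by
    intro S z' i
    have hnb : ∃ j, ∀ l, l ≠ j → Function.update S i z' l = S l :=
      ⟨i, fun l hl => Function.update_of_ne hl _ _⟩
    have hnb' : ∃ j, ∀ l, l ≠ j → S l = Function.update S i z' l :=
      ⟨i, fun l hl => (Function.update_of_ne hl _ _).symm⟩
    rw [abs_le]
    constructor
    · -- lower bound: ∑ A ≤ e^ε ∑ A'
      have h1 : ∑ m : Fin k, A S m * adv (S i) m
          ≤ Real.exp ε * ∑ m : Fin k, A (Function.update S i z') m * adv (S i) m := by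
        rw [Finset.mul_sum]
        apply Finset.sum_le_sum
        intro m _
        have := hDP S (Function.update S i z') hnb' m
        calc A S m * adv (S i) m
            ≤ (Real.exp ε * A (Function.update S i z') m) * adv (S i) m :=
              mul_le_mul_of_nonneg_right this (hadv (S i) m).1
          _ = Real.exp ε * (A (Function.update S i z') m * adv (S i) m) := by ring
      have h2 := hsum_le (Function.update S i z') (S i)
      have h3 := hsum_nonneg (Function.update S i z') (S i)
      have he : 1 ≤ Real.exp ε := Real.one_le_exp hε
      nlinarith
    · -- upper bound: ∑ A' ≤ e^ε ∑ A
      have h1 : ∑ m : Fin k, A (Function.update S i z') m * adv (S i) m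
          ≤ Real.exp ε * ∑ m : Fin k, A S m * adv (S i) m := by
        rw [Finset.mul_sum]
        apply Finset.sum_le_sum
        intro m _
        have := hDP (Function.update S i z') S hnb m
        calc A (Function.update S i z') m * adv (S i) m
            ≤ (Real.exp ε * A S m) * adv (S i) m :=
              mul_le_mul_of_nonneg_right this (hadv (S i) m).1
          _ = Real.exp ε * (A S m * adv (S i) m) := by ring
      have h2 := hsum_le S (S i)
      have h3 := hsum_nonneg S (S i)
      have he : 1 ≤ Real.exp ε := Real.one_le_exp hε
      nlinarith
  -- pointwise bound on the averaged integrand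
  have hg : ∀ (S : Fin n → Z) (z' : Z),
      |(1 / (n : ℝ)) * ∑ i : Fin n,
          ((∑ m : Fin k, A (Function.update S i z') m * adv (S i) m) -
           (∑ m : Fin k, A S m * adv (S i) m))| ≤ C := by
    intro S z'
    rw [abs_mul]
    have hn' : (0:ℝ) < n := Nat.cast_pos.mpr hn
    have h1 : |∑ i : Fin n,
          ((∑ m : Fin k, A (Function.update S i z') m * adv (S i) m) -
           (∑ m : Fin k, A S m * adv (S i) m))| ≤ (n : ℝ) * C := by
      calc _ ≤ ∑ i : Fin n, |(∑ m : Fin k, A (Function.update S i z') m * adv (S i) m) -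
           (∑ m : Fin k, A S m * adv (S i) m)| := Finset.abs_sum_le_sum_abs _ _
        _ ≤ ∑ _i : Fin n, C := Finset.sum_le_sum fun i _ => key S z' i
        _ = (n : ℝ) * C := by simp [mul_comm]
    have h2 : |1 / (n : ℝ)| = 1 / (n : ℝ) := abs_of_pos (by positivity)
    rw [h2]
    rw [div_mul_eq_mul_div, div_le_iff₀ hn']
    calc 1 * |_| ≤ (n:ℝ) * C := by rw [one_mul]; exact h1
      _ = C * n := by ring
  -- bound inner integral
  have hF : ∀ S : Fin n → Z,
      |∫ z', (1 / (n : ℝ)) * ∑ i : Fin n,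
          ((∑ m : Fin k, A (Function.update S i z') m * adv (S i) m) -
           (∑ m : Fin k, A S m * adv (S i) m)) ∂D| ≤ C := by
    intro S
    have := norm_integral_le_of_norm_le_const (μ := D)
      (f := fun z' => (1 / (n : ℝ)) * ∑ i : Fin n,
          ((∑ m : Fin k, A (Function.update S i z') m * adv (S i) m) -
           (∑ m : Fin k, A S m * adv (S i) m))) (C := C)
      (Filter.Eventually.of_forall fun z' => by
        rw [Real.norm_eq_abs]; exact hg S z')
    simpa using this
  have houter := norm_integral_le_of_norm_le_const (μ := Measure.pi fun _ : Fin n => D)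
    (f := fun S => ∫ z', (1 / (n : ℝ)) * ∑ i : Fin n,
          ((∑ m : Fin k, A (Function.update S i z') m * adv (S i) m) -
           (∑ m : Fin k, A S m * adv (S i) m)) ∂D) (C := C)
    (Filter.Eventually.of_forall fun S => by rw [Real.norm_eq_abs]; exact hF S)
  have : |∫ S, ∫ z', (1 / (n : ℝ)) * ∑ i : Fin n,
          ((∑ m : Fin k, A (Function.update S i z') m * adv (S i) m) -
           (∑ m : Fin k, A S m * adv (S i) m)) ∂D ∂(Measure.pi fun _ : Fin n => D)| ≤ C := by
    simpa using houter
  exact le_trans (le_abs_self _) this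
end

section
/- Suppose the model error ε = y − h(x) satisfies ε ∼ N(0, σ_S²) when the point is from the training set (b = 0) and ε ∼ N(0, σ_D²) when drawn fresh from D (b = 1), with 0 < σ_S < σ_D. The adversary that outputs 0 iff |ε| < ε_eq, where ε_eq = σ_D · sqrt(2 ln(σ_D/σ_S)/((σ_D/σ_S)² − 1)), achieves membership advantage erf((σ_D/σ_S) · sqrt(ln(σ_D/σ_S)/((σ_D/σ_S)² − 1))) − erf(sqrt(ln(σ_D/σ_S)/((σ_D/σ_S)² − 1))). -/
open ProbabilityTheory

/-- The Gauss error function `erf x = (1/√π) ∫_{-x}^{x} e^{-t²} dt`. -/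
noncomputable def erf (x : ℝ) : ℝ :=
  (Real.sqrt Real.pi)⁻¹ * ∫ t in (-x)..x, Real.exp (-t ^ 2)

/-!
Both error distributions are centred Gaussians, so each acceptance probability
`Pr[|ε| < c]` is `erf (c / (√2 σ))`, by the substitution `t = ε / (√2 σ)` in the density.
The threshold `ε_eq` carries a factor `σ_D √2`, which cancels against `√2 σ` and leaves
exactly the two arguments of `erf` in the claimed advantage.
-/

open MeasureTheory Real

lemma gaussianPDFReal_sq_eq (μ : ℝ) {σ : ℝ} (hσ : 0 < σ) (x : ℝ) :
    gaussianPDFReal μ ⟨σ ^ 2, sq_nonneg σ⟩ x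
      = (√2 * σ)⁻¹ * ((√π)⁻¹ * exp (-((x - μ) / (√2 * σ)) ^ 2)) := by
  have hnorm : √(2 * π * σ ^ 2) = √2 * σ * √π := by
    rw [sqrt_mul (by positivity), sqrt_mul zero_le_two, sqrt_sq hσ.le]
    ring
  have hexp : -(x - μ) ^ 2 / (2 * σ ^ 2) = -((x - μ) / (√2 * σ)) ^ 2 := by
    rw [div_pow, mul_pow, sq_sqrt zero_le_two]
    ring
  change (√(2 * π * σ ^ 2))⁻¹ * exp (-(x - μ) ^ 2 / (2 * σ ^ 2)) = _
  rw [hnorm, hexp, mul_inv, mul_assoc]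

lemma gaussianReal_abs_sub_lt (μ : ℝ) {σ c : ℝ} (hσ : 0 < σ) (hc : 0 ≤ c) :
    (gaussianReal μ ⟨σ ^ 2, sq_nonneg σ⟩ {x | |x - μ| < c}).toReal
      = erf (c / (√2 * σ)) := by
  have hv : (⟨σ ^ 2, sq_nonneg σ⟩ : NNReal) ≠ 0 := by
    simpa [← NNReal.coe_injective.ne_iff] using hσ.ne'
  have hscale : √2 * σ ≠ 0 := by positivity
  have hset : {x | |x - μ| < c} = Set.Ioo (μ - c) (μ + c) := by
    ext x
    rw [Set.mem_ofPred_eq, abs_sub_lt_iff, sub_lt_iff_lt_add', sub_lt_comm, and_comm,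
      Set.mem_Ioo]
  have hmass :
      0 ≤ ∫ x in Set.Ioo (μ - c) (μ + c), gaussianPDFReal μ ⟨σ ^ 2, sq_nonneg σ⟩ x :=
    setIntegral_nonneg measurableSet_Ioo fun x _ ↦ gaussianPDFReal_nonneg _ _ x
  rw [hset, gaussianReal_apply_eq_integral _ hv, ENNReal.toReal_ofReal hmass,
    ← integral_Ioc_eq_integral_Ioo, ← intervalIntegral.integral_of_le (by linarith)]
  simp_rw [gaussianPDFReal_sq_eq μ hσ]
  rw [intervalIntegral.integral_const_mul,
    intervalIntegral.integral_comp_sub_right (fun y ↦ (√π)⁻¹ * exp (-(y / (√2 * σ)) ^ 2)),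
    sub_sub_cancel_left, add_sub_cancel_left,
    intervalIntegral.integral_comp_div (fun t ↦ (√π)⁻¹ * exp (-t ^ 2)) hscale,
    smul_eq_mul, inv_mul_cancel_left₀ hscale, intervalIntegral.integral_const_mul, erf, neg_div]

lemma mul_sqrt_two_mul_div (a b t : ℝ) : a * √(2 * t) / (√2 * b) = a / b * √t := by
  rw [sqrt_mul zero_le_two, mul_left_comm, mul_div_mul_left _ _ (by positivity),
    div_mul_eq_mul_div]

/-- With Gaussian errors `N(0, σ_S²)` on training points (`b = 0`) and
`N(0, σ_D²)` on fresh points (`b = 1`), `0 < σ_S < σ_D`, the adversary outputting 0 iff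
`|ε| < ε_eq` with `ε_eq = σ_D √(2 ln(σ_D/σ_S) / ((σ_D/σ_S)² − 1))` achieves membership
advantage `erf((σ_D/σ_S)·√(ln(σ_D/σ_S)/((σ_D/σ_S)²−1))) − erf(√(ln(σ_D/σ_S)/((σ_D/σ_S)²−1)))`. -/
theorem gaussian_threshold_membership_advantage
    (σS σD : ℝ) (hσS : 0 < σS) (hσ : σS < σD) :
    let εeq : ℝ := σD * Real.sqrt (2 * Real.log (σD / σS) / ((σD / σS) ^ 2 - 1))
    ((gaussianReal 0 ⟨σS ^ 2, sq_nonneg σS⟩) {x : ℝ | |x| < εeq}).toReal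
      - ((gaussianReal 0 ⟨σD ^ 2, sq_nonneg σD⟩) {x : ℝ | |x| < εeq}).toReal
    = erf ((σD / σS) * Real.sqrt (Real.log (σD / σS) / ((σD / σS) ^ 2 - 1)))
      - erf (Real.sqrt (Real.log (σD / σS) / ((σD / σS) ^ 2 - 1))) := by
  intro εeq
  have hσD : 0 < σD := hσS.trans hσ
  have hεeq : 0 ≤ εeq := by positivity
  have hquot (σ : ℝ) :
      εeq / (√2 * σ) = σD / σ * √(log (σD / σS) / ((σD / σS) ^ 2 - 1)) := by
    change σD * √(2 * log (σD / σS) / ((σD / σS) ^ 2 - 1)) / (√2 * σ) = _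
    rw [mul_div_assoc (2 : ℝ), mul_sqrt_two_mul_div]
  have hcentred : {x : ℝ | |x| < εeq} = {x | |x - 0| < εeq} := by simp only [sub_zero]
  rw [hcentred, gaussianReal_abs_sub_lt 0 hσS hεeq, gaussianReal_abs_sub_lt 0 hσD hεeq, hquot,
    hquot, div_self hσD.ne', one_mul]
end

section
/- The function g(r) = erf(r · sqrt(ln r/(r² − 1))) − erf(sqrt(ln r/(r² − 1))), defined for r > 1, satisfies lim_{r→1⁺} g(r) = 0 and lim_{r→∞} g(r) = 1. -/
open Filter

/-!
Write `t(r) = √(ln r / (r² − 1))`, so that `g(r) = erf(r t(r)) − erf(t(r))`. As `r → 1⁺`,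
`ln r / (r² − 1) = (ln r / (r − 1)) / (r + 1) → 1/2`, so both arguments of `erf` tend to `√(1/2)`
and, `erf` being continuous, `g(r) → 0`. As `r → ∞`, `t(r) → 0` because `ln r = o(r)`, while
`r t(r) ≥ √(ln r) → ∞`; hence `g(r) → erf(∞) − erf(0) = 1`, where `erf(∞) = 1` is the Gaussian
integral `∫ e^{-t²} = √π`.
-/

open Real Topology

lemma integrable_exp_neg_sq : MeasureTheory.Integrable fun t : ℝ => exp (-t ^ 2) := by
  simpa using integrable_exp_neg_mul_sq one_pos

lemma erf_zero : erf 0 = 0 := by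
  simp [erf]

lemma continuous_erf : Continuous erf := by
  let F : ℝ → ℝ := fun x => ∫ t in (0 : ℝ)..x, exp (-t ^ 2)
  have hF : Continuous F := integrable_exp_neg_sq.continuous_primitive 0
  have hdiff (x : ℝ) : erf x = (√π)⁻¹ * (F x - F (-x)) := by
    rw [intervalIntegral.integral_interval_sub_left integrable_exp_neg_sq.intervalIntegrable
      integrable_exp_neg_sq.intervalIntegrable]
    rfl
  exact (continuous_const.mul (hF.sub (hF.comp continuous_neg))).congr fun x => (hdiff x).symm

lemma tendsto_erf_atTop : Tendsto erf atTop (𝓝 1) := by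
  have hgauss : ∫ t : ℝ, exp (-t ^ 2) = √π := by
    simpa using integral_gaussian 1
  have h := (MeasureTheory.intervalIntegral_tendsto_integral integrable_exp_neg_sq
    tendsto_neg_atTop_atBot tendsto_id).const_mul (√π)⁻¹
  rwa [hgauss, inv_mul_cancel₀ (by positivity)] at h

lemma tendsto_log_div_sub_one_nhdsNE_one :
    Tendsto (fun r => log r / (r - 1)) (𝓝[≠] 1) (𝓝 1) := by
  have h := hasDerivAt_iff_tendsto_slope.mp (by simpa using hasDerivAt_log one_ne_zero)
  refine h.congr fun r => ?_
  simp [slope_def_field]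

lemma tendsto_log_div_sq_sub_one_nhdsNE_one :
    Tendsto (fun r => log r / (r ^ 2 - 1)) (𝓝[≠] 1) (𝓝 (1 / 2)) := by
  have hsum : Tendsto (fun r : ℝ => r + 1) (𝓝[≠] 1) (𝓝 2) :=
    ((continuous_add_const 1).tendsto' 1 2 one_add_one_eq_two).mono_left nhdsWithin_le_nhds
  refine (tendsto_log_div_sub_one_nhdsNE_one.div hsum two_ne_zero).congr fun r => ?_
  show log r / (r - 1) / (r + 1) = _
  rw [div_div]
  congr 1
  ring

lemma tendsto_log_div_sq_sub_one_atTop :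
    Tendsto (fun r => log r / (r ^ 2 - 1)) atTop (𝓝 0) := by
  have hlog : Tendsto (fun r => log r / r) atTop (𝓝 0) := by
    simpa using isLittleO_log_id_atTop.tendsto_div_nhds_zero
  refine tendsto_of_tendsto_of_tendsto_of_le_of_le' tendsto_const_nhds hlog ?_ ?_ <;>
    filter_upwards [eventually_ge_atTop 2] with r hr
  · have hden : 0 < r ^ 2 - 1 := by nlinarith
    have hlog : 0 ≤ log r := log_nonneg (by linarith)
    positivity
  · exact div_le_div_of_nonneg_left (log_nonneg (by linarith)) (by linarith) (by nlinarith)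

lemma tendsto_mul_sqrt_log_div_sq_sub_one_atTop :
    Tendsto (fun r => r * √(log r / (r ^ 2 - 1))) atTop atTop := by
  refine tendsto_atTop_mono' _ ?_ (tendsto_sqrt_atTop.comp tendsto_log_atTop)
  filter_upwards [eventually_gt_atTop 1] with r hr
  have hden : 0 < r ^ 2 - 1 := by nlinarith
  have hlog := log_nonneg hr.le
  calc √(log r) ≤ √(r ^ 2 * (log r / (r ^ 2 - 1))) := by
        gcongr
        rw [mul_div_assoc', le_div_iff₀ hden]
        nlinarith
    _ = r * √(log r / (r ^ 2 - 1)) := by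
        rw [sqrt_mul (by positivity), sqrt_sq (by linarith)]

/-- The optimal-threshold Gaussian membership advantage
`g(r) = erf(r √(ln r/(r²−1))) − erf(√(ln r/(r²−1)))` satisfies
`g(r) → 0` as `r → 1⁺` and `g(r) → 1` as `r → ∞`. -/
theorem advantage_limits :
    let g : ℝ → ℝ := fun r =>
      erf (r * Real.sqrt (Real.log r / (r ^ 2 - 1)))
        - erf (Real.sqrt (Real.log r / (r ^ 2 - 1)))
    Tendsto g (nhdsWithin 1 (Set.Ioi 1)) (nhds 0) ∧
    Tendsto g atTop (nhds 1) := by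
  intro g
  constructor
  · have hroot : Tendsto (fun r => √(log r / (r ^ 2 - 1))) (𝓝[>] 1) (𝓝 √(1 / 2)) :=
      (continuous_sqrt.tendsto _).comp <|
        tendsto_log_div_sq_sub_one_nhdsNE_one.mono_left (nhdsGT_le_nhdsNE 1)
    have hprod : Tendsto (fun r => r * √(log r / (r ^ 2 - 1))) (𝓝[>] 1) (𝓝 √(1 / 2)) := by
      simpa using (tendsto_nhdsWithin_of_tendsto_nhds tendsto_id).mul hroot
    simpa [g] using ((continuous_erf.tendsto _).comp hprod).sub
      ((continuous_erf.tendsto _).comp hroot)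
  · have hroot : Tendsto (fun r => √(log r / (r ^ 2 - 1))) atTop (𝓝 0) :=
      (continuous_sqrt.tendsto' 0 0 sqrt_zero).comp tendsto_log_div_sq_sub_one_atTop
    simpa [g, erf_zero] using
      (tendsto_erf_atTop.comp tendsto_mul_sqrt_log_div_sq_sub_one_atTop).sub
        ((continuous_erf.tendsto 0).comp hroot)
end

section
/- Suppose the sensitive attribute t is uniform on {t₁, t₂}, the model satisfies h(v, t₁) = h(v, t₂) + τ for fixed τ ≥ 0, and y = h(v, t) + ε where ε ∼ N(0, σ_S²) if b = 0 and ε ∼ N(0, σ_D²) if b = 1, with σ_S < σ_D. The adversary that outputs the t_i minimizing |y − h(v, t_i)| achieves attribute advantage (1/2)·(erf(τ/(2√2 σ_S)) − erf(τ/(2√2 σ_D))). -/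
open ProbabilityTheory

open MeasureTheory Set in
lemma gauss_cdf (σ : ℝ) (hσ : 0 < σ) (c : ℝ) :
    ((gaussianReal 0 ⟨σ ^ 2, sq_nonneg σ⟩) {x : ℝ | x < c}).toReal
      = 1 / 2 + (1 / 2) * erf (c / (Real.sqrt 2 * σ)) := by
  set v : NNReal := ⟨σ ^ 2, sq_nonneg σ⟩ with hv_def
  have hvc : (v : ℝ) = σ ^ 2 := rfl
  have hvpos : 0 < (v : ℝ) := by rw [hvc]; positivity
  have hv : v ≠ 0 := fun h => by simp [h] at hvpos
  set f := gaussianPDFReal 0 v with hf_def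
  have hfnn : ∀ x, 0 ≤ f x := gaussianPDFReal_nonneg 0 v
  have hfint : Integrable f := integrable_gaussianPDFReal 0 v
  have heven : ∀ x, f (-x) = f x := by
    intro x; simp [hf_def, gaussianPDFReal, neg_sq]
  set k : ℝ := Real.sqrt 2 * σ with hk_def
  have hk : 0 < k := by positivity
  have hk2 : k ^ 2 = 2 * σ ^ 2 := by
    rw [hk_def, mul_pow, Real.sq_sqrt two_pos.le]
  have hfx : ∀ x, f x = (Real.sqrt Real.pi)⁻¹ * k⁻¹ * Real.exp (-(x / k) ^ 2) := by
    intro x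
    have h1 : Real.sqrt (2 * Real.pi * (v : ℝ)) = Real.sqrt Real.pi * k := by
      rw [hk_def, hvc]
      rw [show (2 : ℝ) * Real.pi * σ ^ 2 = Real.pi * (Real.sqrt 2 * σ) ^ 2 by
        rw [mul_pow, Real.sq_sqrt two_pos.le]; ring]
      rw [Real.sqrt_mul Real.pi_pos.le, Real.sqrt_sq (by positivity)]
    have h2 : -(x - 0) ^ 2 / (2 * (v : ℝ)) = -(x / k) ^ 2 := by
      rw [div_pow, sub_zero, neg_div, hk2, hvc]
    simp only [hf_def, gaussianPDFReal, h1, h2, mul_inv]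
  -- measure as integral
  have hset : {x : ℝ | x < c} = Set.Iio c := rfl
  rw [hset, gaussianReal_apply_eq_integral 0 hv,
    ENNReal.toReal_ofReal (setIntegral_nonneg measurableSet_Iio fun x _ => hfnn x)]
  have hIio : ∫ x in Iio c, f x = ∫ x in Iic c, f x :=
    setIntegral_congr_set Iio_ae_eq_Iic
  have hhalf : ∫ x in Iic (0:ℝ), f x = 1 / 2 := by
    have h1 : ∫ x in Iic (0:ℝ), f x = ∫ x in Ioi (0:ℝ), f x := by
      calc ∫ x in Iic (0:ℝ), f x = ∫ x in Iic (0:ℝ), f (-x) := by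
            simp_rw [heven]
        _ = ∫ x in Ioi (-(0:ℝ)), f x := integral_comp_neg_Iic 0 f
        _ = ∫ x in Ioi (0:ℝ), f x := by rw [neg_zero]
    have h2 : (∫ x in Iic (0:ℝ), f x) + ∫ x in Ioi (0:ℝ), f x = 1 := by
      rw [← setIntegral_union (Iic_disjoint_Ioi le_rfl) measurableSet_Ioi
        hfint.integrableOn hfint.integrableOn, Iic_union_Ioi, Measure.restrict_univ]
      exact integral_gaussianPDFReal_eq_one 0 hv
    linarith
  have hsub : ∫ x in Iic c, f x = (∫ x in Iic (0:ℝ), f x) + ∫ x in (0:ℝ)..c, f x := by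
    have := intervalIntegral.integral_Iic_sub_Iic (f := f) (μ := volume)
      hfint.integrableOn hfint.integrableOn (a := 0) (b := c)
    linarith [this]
  have hinterval : ∫ x in (0:ℝ)..c, f x = (1 / 2) * erf (c / k) := by
    have hcont : Continuous fun t : ℝ => Real.exp (-t ^ 2) := by continuity
    have h1 : ∫ x in (0:ℝ)..c, f x
        = (Real.sqrt Real.pi)⁻¹ * k⁻¹ * ∫ x in (0:ℝ)..c, Real.exp (-(x / k) ^ 2) := by
      simp_rw [hfx]
      rw [intervalIntegral.integral_const_mul]
    have h2 : ∫ x in (0:ℝ)..c, Real.exp (-(x / k) ^ 2)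
        = k * ∫ t in (0:ℝ)..(c / k), Real.exp (-t ^ 2) := by
      have := intervalIntegral.integral_comp_div (a := 0) (b := c)
        (fun t : ℝ => Real.exp (-t ^ 2)) hk.ne'
      rw [this, zero_div, smul_eq_mul]
    have h3 : ∫ t in (-(c/k))..(c/k), Real.exp (-t ^ 2)
        = 2 * ∫ t in (0:ℝ)..(c/k), Real.exp (-t ^ 2) := by
      have hneg : ∫ t in (-(c/k))..(0:ℝ), Real.exp (-t ^ 2)
          = ∫ t in (0:ℝ)..(c/k), Real.exp (-t ^ 2) := by
        have := intervalIntegral.integral_comp_neg (a := (0:ℝ)) (b := c / k)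
          (fun t : ℝ => Real.exp (-t ^ 2))
        simp only [neg_neg, neg_sq, neg_zero] at this ⊢
        rw [← this]
      rw [← intervalIntegral.integral_add_adjacent_intervals
        (hcont.intervalIntegrable _ _) (hcont.intervalIntegrable _ _), hneg]
      ring
    rw [h1, h2, erf, h3]
    field_simp
  rw [hIio, hsub, hhalf, hinterval]

open MeasureTheory Set in
lemma gauss_Ioi_eq (σ : ℝ) (hσ : 0 < σ) (c : ℝ) :
    ((gaussianReal 0 ⟨σ ^ 2, sq_nonneg σ⟩) {x : ℝ | -c < x}).toReal
      = ((gaussianReal 0 ⟨σ ^ 2, sq_nonneg σ⟩) {x : ℝ | x < c}).toReal := by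
  set v : NNReal := ⟨σ ^ 2, sq_nonneg σ⟩ with hv_def
  have hvc : (v : ℝ) = σ ^ 2 := rfl
  have hvpos : 0 < (v : ℝ) := by rw [hvc]; positivity
  have hv : v ≠ 0 := fun h => by simp [h] at hvpos
  set f := gaussianPDFReal 0 v with hf_def
  have heven : ∀ x, f (-x) = f x := by
    intro x; simp [hf_def, gaussianPDFReal, neg_sq]
  have h1 : {x : ℝ | -c < x} = Set.Ioi (-c) := rfl
  have h2 : {x : ℝ | x < c} = Set.Iio c := rfl
  rw [h1, h2, gaussianReal_apply_eq_integral 0 hv, gaussianReal_apply_eq_integral 0 hv]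
  refine congrArg (fun r => (ENNReal.ofReal r).toReal) ?_
  calc ∫ x in Ioi (-c), f x = ∫ x in Ioi (-c), f (-x) := by simp_rw [heven]
    _ = ∫ x in Iic (-(-c)), f x := integral_comp_neg_Ioi (-c) f
    _ = ∫ x in Iic c, f x := by rw [neg_neg]
    _ = ∫ x in Iio c, f x := (setIntegral_congr_set Iio_ae_eq_Iic).symm

/-- With a uniform binary target `t ∈ {t₁, t₂}`, model satisfying
`h(v,t₁) = h(v,t₂) + τ` (`τ ≥ 0`) and Gaussian error `N(0,σ_S²)` for `b = 0`,
`N(0,σ_D²)` for `b = 1` with `σ_S < σ_D`, the adversary minimizing `|y − h(v,t_i)|`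
guesses correctly iff `ε > −τ/2` when `t = t₁` and iff `ε < τ/2` when `t = t₂`; its
attribute advantage is `(1/2)(erf(τ/(2√2 σ_S)) − erf(τ/(2√2 σ_D)))`. -/
theorem binary_uniform_attribute_advantage
    (σS σD τ : ℝ) (hσS : 0 < σS) (hσ : σS < σD) (hτ : 0 ≤ τ) :
    -- Σᵢ Pr[t = tᵢ] (Pr[𝒜 = tᵢ ∣ b = 0, t = tᵢ] − Pr[𝒜 = tᵢ ∣ b = 1, t = tᵢ])
    (1 / 2 : ℝ) *
        (((gaussianReal 0 ⟨σS ^ 2, sq_nonneg σS⟩) {x : ℝ | -τ / 2 < x}).toReal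
          - ((gaussianReal 0 ⟨σD ^ 2, sq_nonneg σD⟩) {x : ℝ | -τ / 2 < x}).toReal)
      + (1 / 2 : ℝ) *
        (((gaussianReal 0 ⟨σS ^ 2, sq_nonneg σS⟩) {x : ℝ | x < τ / 2}).toReal
          - ((gaussianReal 0 ⟨σD ^ 2, sq_nonneg σD⟩) {x : ℝ | x < τ / 2}).toReal)
    = (1 / 2) * (erf (τ / (2 * Real.sqrt 2 * σS)) - erf (τ / (2 * Real.sqrt 2 * σD))) := by
  have hσD : 0 < σD := hσS.trans hσ
  have hset : {x : ℝ | -τ / 2 < x} = {x : ℝ | -(τ / 2) < x} := by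
    norm_num [neg_div]
  rw [hset, gauss_Ioi_eq σS hσS (τ / 2), gauss_Ioi_eq σD hσD (τ / 2),
    gauss_cdf σS hσS (τ / 2), gauss_cdf σD hσD (τ / 2)]
  have hargS : τ / 2 / (Real.sqrt 2 * σS) = τ / (2 * Real.sqrt 2 * σS) := by
    rw [div_div, mul_assoc]
  have hargD : τ / 2 / (Real.sqrt 2 * σD) = τ / (2 * Real.sqrt 2 * σD) := by
    rw [div_div, mul_assoc]
  rw [hargS, hargD]
  ring
end

section
/- Let g(r) = erf(r·√(ln r/(r²−1))) − erf(√(ln r/(r²−1))) for r > 1 (the optimal-threshold Gaussian membership advantage) and u(r) = erf(1/√2) − erf(1/(√2 r)) (the fixed-threshold advantage). Then g(r) ≥ u(r) for all r > 1. -/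
lemma exp_neg_sq_intable (u v : ℝ) :
    IntervalIntegrable (fun t : ℝ => Real.exp (-t ^ 2)) MeasureTheory.volume u v :=
  (Real.continuous_exp.comp (continuous_pow 2).neg).intervalIntegrable u v

lemma erf_sub (a b : ℝ) :
    erf b - erf a = (Real.sqrt Real.pi)⁻¹ * (2 * ∫ t in a..b, Real.exp (-t ^ 2)) := by
  unfold erf
  rw [← mul_sub]
  congr 1
  have h1 : (∫ t in (-b)..b, Real.exp (-t ^ 2))
      = (∫ t in (-b)..(-a), Real.exp (-t ^ 2)) + (∫ t in (-a)..a, Real.exp (-t ^ 2))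
        + (∫ t in a..b, Real.exp (-t ^ 2)) := by
    rw [intervalIntegral.integral_add_adjacent_intervals (exp_neg_sq_intable _ _)
      (exp_neg_sq_intable _ _), intervalIntegral.integral_add_adjacent_intervals
      (exp_neg_sq_intable _ _) (exp_neg_sq_intable _ _)]
  have h2 : (∫ t in (-b)..(-a), Real.exp (-t ^ 2)) = ∫ t in a..b, Real.exp (-t ^ 2) := by
    rw [← intervalIntegral.integral_comp_neg (fun t => Real.exp (-t ^ 2))]
    simp
  rw [h1, h2]; ring

lemma erf_mul_sub {r : ℝ} (hr : 1 < r) {x : ℝ} (hx : 0 ≤ x)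
    (hxA : x ≤ Real.sqrt (Real.log r / (r ^ 2 - 1))) :
    erf (r * x) - erf x
      ≤ erf (r * Real.sqrt (Real.log r / (r ^ 2 - 1)))
        - erf (Real.sqrt (Real.log r / (r ^ 2 - 1))) := by
  set A := Real.sqrt (Real.log r / (r ^ 2 - 1)) with hA
  have hr0 : (0 : ℝ) < r := lt_trans one_pos hr
  have hrr : (0 : ℝ) < r ^ 2 - 1 := by nlinarith
  have hlog : 0 < Real.log r := Real.log_pos hr
  have hA2 : A ^ 2 = Real.log r / (r ^ 2 - 1) :=
    Real.sq_sqrt (by positivity)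
  -- rewrite as an inequality of differences of erf
  have key : erf A - erf x ≤ erf (r * A) - erf (r * x) := by
    rw [erf_sub, erf_sub]
    have hsub : (∫ t in (r * x)..(r * A), Real.exp (-t ^ 2))
        = r * ∫ s in x..A, Real.exp (-(r * s) ^ 2) := by
      rw [← intervalIntegral.smul_integral_comp_mul_left (fun t => Real.exp (-t ^ 2)) r,
        smul_eq_mul]
    rw [hsub]
    have hπ : (0 : ℝ) ≤ (Real.sqrt Real.pi)⁻¹ := by positivity
    apply mul_le_mul_of_nonneg_left _ hπ
    apply mul_le_mul_of_nonneg_left _ (by norm_num : (0:ℝ) ≤ 2)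
    rw [show r * ∫ s in x..A, Real.exp (-(r * s) ^ 2)
        = ∫ s in x..A, r * Real.exp (-(r * s) ^ 2) from
      (intervalIntegral.integral_const_mul r _).symm]
    apply intervalIntegral.integral_mono_on hxA (exp_neg_sq_intable _ _)
      ((by fun_prop : Continuous fun s : ℝ => r * Real.exp (-(r * s) ^ 2)).intervalIntegrable x A)
    intro s hs
    have hs0 : 0 ≤ s := le_trans hx hs.1
    have hsA : s ≤ A := hs.2
    have hs2 : s ^ 2 ≤ A ^ 2 := by nlinarith
    have hkey : (r ^ 2 - 1) * s ^ 2 ≤ Real.log r := by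
      rw [hA2] at hs2
      calc (r ^ 2 - 1) * s ^ 2 ≤ (r ^ 2 - 1) * (Real.log r / (r ^ 2 - 1)) := by
            exact mul_le_mul_of_nonneg_left hs2 (le_of_lt hrr)
        _ = Real.log r := by field_simp
    have : Real.exp (-s ^ 2) ≤ Real.exp (Real.log r + -(r * s) ^ 2) := by
      apply Real.exp_le_exp.2; nlinarith
    calc Real.exp (-s ^ 2) ≤ Real.exp (Real.log r + -(r * s) ^ 2) := this
      _ = r * Real.exp (-(r * s) ^ 2) := by
          rw [Real.exp_add, Real.exp_log hr0]
  linarith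

/-- For every generalization ratio `r > 1`, the optimal-threshold Gaussian
membership advantage `g(r) = erf(r √(ln r/(r²−1))) − erf(√(ln r/(r²−1)))` dominates the
fixed-threshold advantage `u(r) = erf(1/√2) − erf(1/(√2 r))`. -/
theorem optimal_threshold_dominates_fixed_threshold (r : ℝ) (hr : 1 < r) :
    erf (1 / Real.sqrt 2) - erf (1 / (Real.sqrt 2 * r))
      ≤ erf (r * Real.sqrt (Real.log r / (r ^ 2 - 1)))
        - erf (Real.sqrt (Real.log r / (r ^ 2 - 1))) := by
  have hr0 : (0 : ℝ) < r := lt_trans one_pos hr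
  have h2 : (0 : ℝ) < Real.sqrt 2 := Real.sqrt_pos.2 (by norm_num)
  have hx0 : (0 : ℝ) ≤ 1 / (Real.sqrt 2 * r) := by positivity
  have hrr : (0 : ℝ) < r ^ 2 - 1 := by nlinarith
  have hlog : 0 < Real.log r := Real.log_pos hr
  have hrx : r * (1 / (Real.sqrt 2 * r)) = 1 / Real.sqrt 2 := by
    field_simp [mul_comm]
  -- the fixed threshold is below the optimal threshold
  have hineq : r ^ 2 - 1 ≤ 2 * r ^ 2 * Real.log r := by
    have h := Real.log_le_sub_one_of_pos (x := 1 / r ^ 2) (by positivity)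
    rw [Real.log_div one_ne_zero (by positivity), Real.log_one, Real.log_pow] at h
    have : 1 - 1 / r ^ 2 ≤ 2 * Real.log r := by push_cast at h ⊢; linarith
    have hr2 : (0 : ℝ) < r ^ 2 := by positivity
    calc r ^ 2 - 1 = r ^ 2 * (1 - 1 / r ^ 2) := by field_simp
      _ ≤ r ^ 2 * (2 * Real.log r) := by
          exact mul_le_mul_of_nonneg_left this (le_of_lt hr2)
      _ = 2 * r ^ 2 * Real.log r := by ring
  have hxA : 1 / (Real.sqrt 2 * r) ≤ Real.sqrt (Real.log r / (r ^ 2 - 1)) := by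
    rw [Real.le_sqrt hx0 (by positivity)]
    have hsq : (1 / (Real.sqrt 2 * r)) ^ 2 = 1 / (2 * r ^ 2) := by
      rw [div_pow, mul_pow, Real.sq_sqrt (by norm_num : (0:ℝ) ≤ 2)]
      norm_num
    rw [hsq, div_le_div_iff₀ (by positivity) hrr]
    nlinarith
  have := erf_mul_sub hr hx0 hxA
  rwa [hrx] at this
end

section
/- For fixed 0 < σ_S < σ_D, the function φ(c) = erf(c/(√2 σ_S)) − erf(c/(√2 σ_D)) over c > 0 attains its unique maximum at c = ε_eq = σ_D·√(2 ln(σ_D/σ_S)/((σ_D/σ_S)² − 1)). -/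
open Real Set

theorem hasDerivAt_integral_neg_self {f : ℝ → ℝ} (hf : Continuous f) (x : ℝ) :
    HasDerivAt (fun y => ∫ t in (-y)..y, f t) (f x + f (-x)) x := by
  have hsplit : (fun y => ∫ t in (-y)..y, f t) =
      fun y => (∫ t in (0 : ℝ)..y, f t) - ∫ t in (0 : ℝ)..(-y), f t := by
    funext y
    rw [intervalIntegral.integral_interval_sub_left (hf.intervalIntegrable _ _)
      (hf.intervalIntegrable _ _)]
  rw [hsplit]
  have hneg := (hf.integral_hasStrictDerivAt 0 (-x)).hasDerivAt.comp x (hasDerivAt_neg x)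
  exact ((hf.integral_hasStrictDerivAt 0 x).hasDerivAt.sub hneg).congr_deriv (by ring)

theorem hasDerivAt_erf (x : ℝ) : HasDerivAt erf (2 / √π * exp (-x ^ 2)) x := by
  have h := (hasDerivAt_integral_neg_self (by fun_prop : Continuous fun t : ℝ => exp (-t ^ 2))
    x).const_mul (√π)⁻¹
  exact h.congr_deriv (by rw [neg_sq]; ring)

theorem hasDerivAt_erf_div_sqrt_two_mul (σ c : ℝ) :
    HasDerivAt (fun c => erf (c / (√2 * σ))) (√(2 / π) * (exp (-c ^ 2 / (2 * σ ^ 2)) / σ)) c := by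
  refine ((hasDerivAt_erf _).comp c ((hasDerivAt_id c).div_const (√2 * σ))).congr_deriv ?_
  have hsqrt2 : √2 ^ 2 = 2 := sq_sqrt zero_le_two
  rw [div_pow, mul_pow, hsqrt2, sqrt_div' _ pi_pos.le, neg_div]
  field_simp
  rw [hsqrt2, id]

theorem lt_of_deriv_pos_of_deriv_neg {f : ℝ → ℝ} {a b x : ℝ} (hf : Continuous f) (hab : a ≤ b)
    (hpos : ∀ y ∈ Ioo a b, 0 < deriv f y) (hneg : ∀ y ∈ Ioi b, deriv f y < 0)
    (hax : a ≤ x) (hxb : x ≠ b) : f x < f b := by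
  rcases hxb.lt_or_gt with hlt | hgt
  · refine strictMonoOn_of_deriv_pos (convex_Icc a b) hf.continuousOn ?_ ⟨hax, hlt.le⟩
      ⟨hab, le_rfl⟩ hlt
    rwa [interior_Icc]
  · refine strictAntiOn_of_deriv_neg (convex_Ici b) hf.continuousOn ?_ self_mem_Ici
      hgt.le hgt
    rwa [interior_Ici]

noncomputable def eqErrorThreshold (σS σD : ℝ) : ℝ :=
  σD * √(2 * log (σD / σS) / ((σD / σS) ^ 2 - 1))

noncomputable def thresholdAdvantage (σS σD c : ℝ) : ℝ :=
  erf (c / (√2 * σS)) - erf (c / (√2 * σD))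

theorem eqErrorThreshold_radicand_pos {σS σD : ℝ} (hσS : 0 < σS) (hσ : σS < σD) :
    0 < 2 * log (σD / σS) / ((σD / σS) ^ 2 - 1) := by
  have hratio : 1 < σD / σS := (one_lt_div hσS).2 hσ
  have hden : 0 < (σD / σS) ^ 2 - 1 := by nlinarith
  exact div_pos (mul_pos two_pos (log_pos hratio)) hden

theorem eqErrorThreshold_pos {σS σD : ℝ} (hσS : 0 < σS) (hσ : σS < σD) :
    0 < eqErrorThreshold σS σD :=
  mul_pos (hσS.trans hσ) (sqrt_pos.2 (eqErrorThreshold_radicand_pos hσS hσ))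

theorem eqErrorThreshold_sq_mul {σS σD : ℝ} (hσS : 0 < σS) (hσ : σS < σD) :
    eqErrorThreshold σS σD ^ 2 * (1 / (2 * σS ^ 2) - 1 / (2 * σD ^ 2)) = log σD - log σS := by
  have hσD : 0 < σD := hσS.trans hσ
  have hgap : σD ^ 2 - σS ^ 2 ≠ 0 := by nlinarith
  rw [eqErrorThreshold, mul_pow, sq_sqrt (eqErrorThreshold_radicand_pos hσS hσ).le,
    log_div hσD.ne' hσS.ne']
  field_simp

theorem exp_div_eq_exp_sub_log {σ : ℝ} (hσ : 0 < σ) (x : ℝ) : exp x / σ = exp (x - log σ) := by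
  rw [exp_sub, exp_log hσ]

theorem log_gaussian_density_sub {σS σD : ℝ} (hσS : 0 < σS) (hσ : σS < σD) (c : ℝ) :
    (-c ^ 2 / (2 * σS ^ 2) - log σS) - (-c ^ 2 / (2 * σD ^ 2) - log σD) =
      (eqErrorThreshold σS σD ^ 2 - c ^ 2) * (1 / (2 * σS ^ 2) - 1 / (2 * σD ^ 2)) := by
  rw [sub_mul, eqErrorThreshold_sq_mul hσS hσ]
  ring

theorem gaussian_density_sub_pos_iff {σS σD : ℝ} (hσS : 0 < σS) (hσ : σS < σD) (c : ℝ) :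
    0 < exp (-c ^ 2 / (2 * σS ^ 2)) / σS - exp (-c ^ 2 / (2 * σD ^ 2)) / σD ↔
      c ^ 2 < eqErrorThreshold σS σD ^ 2 := by
  have hA : 0 < 1 / (2 * σS ^ 2) - 1 / (2 * σD ^ 2) :=
    sub_pos.2 (one_div_lt_one_div_of_lt (by positivity) (by gcongr))
  rw [sub_pos, exp_div_eq_exp_sub_log hσS, exp_div_eq_exp_sub_log (hσS.trans hσ), exp_lt_exp,
    ← sub_pos, log_gaussian_density_sub hσS hσ, mul_pos_iff_of_pos_right hA, sub_pos]

theorem gaussian_density_sub_neg_iff {σS σD : ℝ} (hσS : 0 < σS) (hσ : σS < σD) (c : ℝ) :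
    exp (-c ^ 2 / (2 * σS ^ 2)) / σS - exp (-c ^ 2 / (2 * σD ^ 2)) / σD < 0 ↔
      eqErrorThreshold σS σD ^ 2 < c ^ 2 := by
  have hA : 0 < 1 / (2 * σS ^ 2) - 1 / (2 * σD ^ 2) :=
    sub_pos.2 (one_div_lt_one_div_of_lt (by positivity) (by gcongr))
  rw [sub_neg, exp_div_eq_exp_sub_log hσS, exp_div_eq_exp_sub_log (hσS.trans hσ), exp_lt_exp,
    ← sub_neg, log_gaussian_density_sub hσS hσ, ← neg_pos, ← neg_mul,
    mul_pos_iff_of_pos_right hA, neg_pos, sub_neg]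

theorem hasDerivAt_thresholdAdvantage (σS σD c : ℝ) :
    HasDerivAt (thresholdAdvantage σS σD)
      (√(2 / π) * (exp (-c ^ 2 / (2 * σS ^ 2)) / σS - exp (-c ^ 2 / (2 * σD ^ 2)) / σD)) c := by
  rw [mul_sub]
  exact (hasDerivAt_erf_div_sqrt_two_mul σS c).sub (hasDerivAt_erf_div_sqrt_two_mul σD c)

theorem thresholdAdvantage_lt_eqErrorThreshold {σS σD c : ℝ} (hσS : 0 < σS) (hσ : σS < σD)
    (hc : 0 < c) (hne : c ≠ eqErrorThreshold σS σD) :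
    thresholdAdvantage σS σD c < thresholdAdvantage σS σD (eqErrorThreshold σS σD) := by
  have hε := eqErrorThreshold_pos hσS hσ
  have hderiv (x : ℝ) := (hasDerivAt_thresholdAdvantage σS σD x).deriv
  have hsqrt : 0 < √(2 / π) := sqrt_pos.2 (by positivity)
  refine lt_of_deriv_pos_of_deriv_neg (a := 0)
    (continuous_iff_continuousAt.2 fun x ↦ (hasDerivAt_thresholdAdvantage σS σD x).continuousAt)
    hε.le (fun x hx ↦ ?_) (fun x hx ↦ ?_) hc.le hne
  · rw [hderiv]
    exact mul_pos hsqrt ((gaussian_density_sub_pos_iff hσS hσ x).2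
      (pow_lt_pow_left₀ hx.2 hx.1.le two_ne_zero))
  · rw [hderiv]
    exact mul_neg_of_pos_of_neg hsqrt ((gaussian_density_sub_neg_iff hσS hσ x).2
      (pow_lt_pow_left₀ hx hε.le two_ne_zero))

/-- For fixed `0 < σ_S < σ_D`, the advantage of thresholding at `|ε| < c`,
`φ(c) = erf(c/(√2 σ_S)) − erf(c/(√2 σ_D))`, attains its unique maximum over `c > 0` at
`c = ε_eq = σ_D √(2 ln(σ_D/σ_S)/((σ_D/σ_S)² − 1))`. -/
theorem threshold_advantage_unique_max
    (σS σD : ℝ) (hσS : 0 < σS) (hσ : σS < σD) :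
    let φ : ℝ → ℝ := fun c =>
      erf (c / (Real.sqrt 2 * σS)) - erf (c / (Real.sqrt 2 * σD))
    let εeq : ℝ := σD * Real.sqrt (2 * Real.log (σD / σS) / ((σD / σS) ^ 2 - 1))
    (∀ c : ℝ, 0 < c → φ c ≤ φ εeq) ∧
    (∀ c : ℝ, 0 < c → c ≠ εeq → φ c < φ εeq) := by
  intro φ εeq
  have hlt : ∀ c : ℝ, 0 < c → c ≠ εeq → φ c < φ εeq := fun c hc hne ↦
    thresholdAdvantage_lt_eqErrorThreshold hσS hσ hc hne
  refine ⟨fun c hc ↦ ?_, hlt⟩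
  rcases eq_or_ne c εeq with rfl | hne
  · exact le_rfl
  · exact (hlt c hc hne).le
end
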